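/- There do not exist five unit vectors y_1, ..., y_5 in ℝ^3 with ∑_{j=1}^5 y_j = 0 such that for every j ∈ {1, ..., 5}, among the four indices l ≠ j there are exactly two with ⟨y_j, y_l⟩ = 0 and exactly two with ⟨y_j, y_l⟩ = −1/2. -/

import Mathlib

/-!
For vectors `y_j` in `ℝ^d` with frame operator `S = ∑ y_j y_jᵀ`, one has `tr S = ∑ ‖y_j‖²` and
`tr S² = ∑_{j,l} ⟨y_j, y_l⟩²`, so Cauchy–Schwarz on the diagonal of `S` gives the frame potential
bound `(∑ ‖y_j‖²)² ≤ d ∑_{j,l} ⟨y_j, y_l⟩²`. In the configuration every row of the Gram matrix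
contributes `1 + 2 · (1/2)² = 3/2`, so `25 ≤ 3 · 15/2`, which is false.
-/

open Finset Matrix

namespace Matrix

variable {m n : Type*} [Fintype m] [Fintype n]

theorem trace_mul_transpose_self (M : Matrix m n ℝ) : (M * Mᵀ).trace = ∑ i, ∑ j, M i j ^ 2 := by
  simp [trace, mul_apply, sq]

theorem sq_trace_le_card_mul_trace_mul_transpose_self (M : Matrix n n ℝ) :
    M.trace ^ 2 ≤ Fintype.card n * (M * Mᵀ).trace := by
  have hdiag : ∑ i, M i i ^ 2 ≤ ∑ i, ∑ j, M i j ^ 2 :=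
    sum_le_sum fun i _ ↦ single_le_sum (fun j _ ↦ sq_nonneg (M i j)) (mem_univ i)
  calc M.trace ^ 2 ≤ Fintype.card n * ∑ i, M i i ^ 2 := sq_sum_le_card_mul_sum_sq
    _ ≤ Fintype.card n * (M * Mᵀ).trace := by
      rw [trace_mul_transpose_self]; gcongr

end Matrix

variable {ι κ : Type*} [Fintype ι] [Fintype κ]

omit [Fintype ι] in
theorem gram_eq_mul_transpose (v : ι → EuclideanSpace ℝ κ) :
    gram ℝ v = (of fun j i ↦ v j i) * (of fun j i ↦ v j i)ᵀ := by
  ext j l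
  simp [mul_apply, PiLp.inner_apply, mul_comm]

theorem sq_sum_norm_sq_le_card_mul_sum_inner_sq (v : ι → EuclideanSpace ℝ κ) :
    (∑ j, ‖v j‖ ^ 2) ^ 2 ≤ Fintype.card κ * ∑ j, ∑ l, inner ℝ (v j) (v l) ^ 2 := by
  set A : Matrix ι κ ℝ := of fun j i ↦ v j i
  have htrace : (Aᵀ * A).trace = ∑ j, ‖v j‖ ^ 2 := by
    rw [trace_mul_comm, ← gram_eq_mul_transpose]
    simp [trace]
  have hpotential : ((Aᵀ * A) * (Aᵀ * A)ᵀ).trace = ∑ j, ∑ l, inner ℝ (v j) (v l) ^ 2 := by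
    simp only [← gram_apply (𝕜 := ℝ), ← trace_mul_transpose_self, gram_eq_mul_transpose,
      transpose_mul, transpose_transpose, Matrix.mul_assoc]
    rw [trace_mul_comm]
    simp only [A, Matrix.mul_assoc]
  simpa only [htrace, hpotential] using sq_trace_le_card_mul_trace_mul_transpose_self (Aᵀ * A)

theorem Finset.sum_comp_eq_of_two_values {α β M : Type*} [DecidableEq β]
    [AddCommMonoid M] {s : Finset α} {f : α → β} {a b : β} (hab : a ≠ b) (g : β → M)
    (hs : #s = #{x ∈ s | f x = a} + #{x ∈ s | f x = b}) :
    ∑ x ∈ s, g (f x) = #{x ∈ s | f x = a} • g a + #{x ∈ s | f x = b} • g b := by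
  have hrest : {x ∈ s | f x = b} = {x ∈ s | ¬f x = a} := by
    refine eq_of_subset_of_card_le (fun x hx ↦ ?_) ?_
    · rw [mem_filter] at hx ⊢
      exact ⟨hx.1, hx.2 ▸ hab.symm⟩
    · have := card_filter_add_card_filter_not (s := s) (fun x ↦ f x = a)
      omega
  have hconst : ∀ c, ∑ x ∈ s with f x = c, g (f x) = #{x ∈ s | f x = c} • g c := fun c ↦ by
    rw [← sum_const]
    exact sum_congr rfl fun x hx ↦ by rw [(mem_filter.1 hx).2]
  rw [← sum_filter_add_sum_filter_not s (f · = a), ← hrest, hconst, hconst]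

theorem Set.ncard_setOf_ne_and_eq_card_filter_erase {α : Type*} [Fintype α] [DecidableEq α]
    (j : α) (p : α → Prop) [DecidablePred p] :
    {l | l ≠ j ∧ p l}.ncard = #{l ∈ Finset.univ.erase j | p l} := by
  rw [← Set.ncard_coe_finset]
  congr 1
  ext l
  simp

theorem sum_inner_sq_eq_of_two_angles {E : Type*} [NormedAddCommGroup E] [InnerProductSpace ℝ E]
    {y : ι → E} {j : ι} (hj : ‖y j‖ = 1) {a b : ℝ} (hab : a ≠ b) {p q : ℕ}
    (hp : {l | l ≠ j ∧ inner ℝ (y j) (y l) = a}.ncard = p)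
    (hq : {l | l ≠ j ∧ inner ℝ (y j) (y l) = b}.ncard = q)
    (hcard : Fintype.card ι = p + q + 1) :
    ∑ l, inner ℝ (y j) (y l) ^ 2 = 1 + p * a ^ 2 + q * b ^ 2 := by
  classical
  rw [Set.ncard_setOf_ne_and_eq_card_filter_erase] at hp hq
  have herase : #(univ.erase j) = p + q := by
    rw [card_erase_of_mem (mem_univ j), card_univ]
    omega
  rw [← add_sum_erase _ _ (mem_univ j), real_inner_self_eq_norm_sq, hj,
    sum_comp_eq_of_two_values hab (· ^ 2) (by rw [herase, hp, hq]), hp, hq]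
  simp only [nsmul_eq_mul]
  ring

theorem no_zero_summing_configuration :
    ¬ ∃ y : Fin 5 → EuclideanSpace ℝ (Fin 3),
      (∀ j, ‖y j‖ = 1) ∧ (∑ j, y j = 0) ∧
      ∀ j, {l | l ≠ j ∧ (inner ℝ (y j) (y l) : ℝ) = 0}.ncard = 2 ∧
           {l | l ≠ j ∧ (inner ℝ (y j) (y l) : ℝ) = -(1 / 2)}.ncard = 2 := by
  rintro ⟨y, hnorm, -, hangles⟩
  have hrow : ∀ j, ∑ l, inner ℝ (y j) (y l) ^ 2 = 3 / 2 := fun j ↦ by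
    rw [sum_inner_sq_eq_of_two_angles (hnorm j) (by norm_num) (hangles j).1 (hangles j).2 rfl]
    norm_num
  have hbound := sq_sum_norm_sq_le_card_mul_sum_inner_sq y
  simp only [hnorm, hrow, sum_const, card_univ, Fintype.card_fin] at hbound
  norm_num at hbound
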